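/- If A is a bounded linear operator on a complex Hilbert space and there exists a nonzero complex number λ such that ‖A + λI‖ = ‖A‖ + |λ|, then A is normaloid, i.e., w(A) = ‖A‖. -/

import Mathlib

variable {H : Type*} [NormedAddCommGroup H] [InnerProductSpace ℂ H] [CompleteSpace H]

/-- The numerical range of a bounded operator `A`, i.e. `{⟨Ax, x⟩ : ‖x‖ = 1}`. -/
def numRange (A : H →L[ℂ] H) : Set ℂ :=
  {z | ∃ x : H, ‖x‖ = 1 ∧ inner ℂ (A x) x = z}

/-- The numerical radius of a bounded operator. -/
noncomputable def numRadius (A : H →L[ℂ] H) : ℝ :=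
  sSup ((fun z : ℂ => ‖z‖) '' (numRange A))

lemma exists_unit_vec (T : H →L[ℂ] H) {r : ℝ} (hr0 : 0 ≤ r) (hr : r < ‖T‖) :
    ∃ x : H, ‖x‖ = 1 ∧ r < ‖T x‖ := by
  obtain ⟨x, hx1, hx2⟩ := T.exists_lt_apply_of_lt_opNorm hr
  have hTx : 0 < ‖T x‖ := lt_of_le_of_lt hr0 hx2
  have hx0 : x ≠ 0 := by
    intro hx0
    rw [hx0, map_zero, norm_zero] at hTx
    exact lt_irrefl 0 hTx
  have hxpos : 0 < ‖x‖ := norm_pos_iff.mpr hx0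
  refine ⟨((‖x‖⁻¹ : ℝ) : ℂ) • x, ?_, ?_⟩
  · rw [norm_smul, Complex.norm_real, Real.norm_eq_abs,
      abs_of_pos (inv_pos.mpr hxpos)]
    field_simp
  · rw [map_smul, norm_smul, Complex.norm_real, Real.norm_eq_abs,
      abs_of_pos (inv_pos.mpr hxpos)]
    have h1 : (1:ℝ) ≤ ‖x‖⁻¹ := one_le_inv_iff₀.mpr ⟨hxpos, hx1.le⟩
    calc r < ‖T x‖ := hx2
    _ = 1 * ‖T x‖ := (one_mul _).symm
    _ ≤ ‖x‖⁻¹ * ‖T x‖ := by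
        exact mul_le_mul_of_nonneg_right h1 (norm_nonneg _)

theorem normaloid_of_norm_add (A : H →L[ℂ] H) (lam : ℂ) (hlam : lam ≠ 0)
    (h : ‖A + lam • (1 : H →L[ℂ] H)‖ = ‖A‖ + ‖lam‖) :
    numRadius A = ‖A‖ := by
  set M := ‖A‖ with hM
  set c := ‖lam‖ with hcdef
  have hc : 0 < c := by
    simpa [hcdef] using (norm_pos_iff.mpr hlam)
  have hM0 : 0 ≤ M := norm_nonneg A
  -- upper bound on the numerical range
  have hbdd : ∀ y ∈ (fun z : ℂ => ‖z‖) '' (numRange A), y ≤ M := by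
    rintro y ⟨z, ⟨x, hx, hz⟩, rfl⟩
    have : (fun z : ℂ => ‖z‖) z = ‖z‖ := rfl
    rw [this, ← hz]
    calc ‖(inner ℂ (A x) x : ℂ)‖ ≤ ‖A x‖ * ‖x‖ := norm_inner_le_norm _ _
    _ ≤ (‖A‖ * ‖x‖) * ‖x‖ := by
        exact mul_le_mul_of_nonneg_right (A.le_opNorm x) (norm_nonneg _)
    _ = M := by rw [hx]; ring
  have hBdd : BddAbove ((fun z : ℂ => ‖z‖) '' (numRange A)) := ⟨M, hbdd⟩
  -- key claim
  have key : ∀ ε : ℝ, 0 < ε → ∃ z ∈ numRange A, M - ε < ‖z‖ := by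
    intro ε hε
    set δ : ℝ := min c (ε * c / (M + c)) with hδdef
    have hMc : 0 < M + c := by linarith
    have hδpos : 0 < δ := lt_min hc (by positivity)
    have hδ1 : δ ≤ c := min_le_left _ _
    have hδ2 : δ * (M + c) ≤ ε * c := by
      have := min_le_right c (ε * c / (M + c))
      calc δ * (M + c) ≤ (ε * c / (M + c)) * (M + c) := by
            exact mul_le_mul_of_nonneg_right this hMc.le
      _ = ε * c := by field_simp
    have hr0 : (0:ℝ) ≤ M + c - δ := by linarith
    have hrlt : M + c - δ < ‖A + lam • (1 : H →L[ℂ] H)‖ := by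
      rw [h]; linarith
    obtain ⟨x, hx, hx2⟩ := exists_unit_vec (A + lam • (1 : H →L[ℂ] H)) hr0 hrlt
    have happ : (A + lam • (1 : H →L[ℂ] H)) x = A x + lam • x := by
      simp [ContinuousLinearMap.add_apply]
    rw [happ] at hx2
    set z : ℂ := inner ℂ (A x) x with hzdef
    refine ⟨z, ⟨x, hx, rfl⟩, ?_⟩
    -- expand the square
    have hexp : ‖A x + lam • x‖ ^ 2
        = ‖A x‖ ^ 2 + 2 * Complex.re (lam * z) + c ^ 2 := by
      rw [@norm_add_sq ℂ _ _ _ _ (A x) (lam • x)]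
      rw [inner_smul_right]
      rw [norm_smul]
      have : ‖lam‖ = c := rfl
      rw [this, hx, mul_one]
      simp [hzdef]
    have hsq : (M + c - δ) ^ 2 < ‖A x + lam • x‖ ^ 2 := by
      exact pow_lt_pow_left₀ hx2 hr0 (by norm_num)
    have hAx : ‖A x‖ ≤ M := by
      calc ‖A x‖ ≤ ‖A‖ * ‖x‖ := A.le_opNorm x
      _ = M := by rw [hx]; ring
    have hAx2 : ‖A x‖ ^ 2 ≤ M ^ 2 := by
      exact pow_le_pow_left₀ (norm_nonneg _) hAx 2
    have hre : Complex.re (lam * z) ≤ c * ‖z‖ := by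
      calc Complex.re (lam * z) ≤ ‖lam * z‖ := Complex.re_le_norm _
      _ = c * ‖z‖ := by rw [norm_mul]
    have habs : 0 ≤ ‖z‖ := norm_nonneg _
    nlinarith [hsq, hexp, hAx2, hre, hδ2, hδpos, hc, hM0]
  refine le_antisymm (Real.sSup_le hbdd hM0) ?_
  refine le_of_forall_sub_le fun ε hε => ?_
  obtain ⟨z, hz, hzabs⟩ := key ε hε
  calc M - ε ≤ ‖z‖ := hzabs.le
  _ ≤ sSup ((fun z : ℂ => ‖z‖) '' (numRange A)) := le_csSup hBdd ⟨z, hz, rfl⟩
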